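/- arXiv:1803.09098 — 3 statements merged into one kernel-verified Lean document; each statement's English description precedes it below -/
import Mathlib

section
/- Let G be a finite group acting on a finitely generated free chain complex C_* over a commutative ring R preserving the basis Ω, let M be a G-equivariant acyclic matching on P(C_*, Ω) with all weights w(b ≻ a) invertible for (a,b) ∈ M, and let (a,b) ∈ M with b ∈ Ωₙ. Then for any g ∈ G with g·b ≠ b, the coefficient of a in ∂(g·b) is zero. -/
/-!
If the coefficient of `a` in `∂(g • b)` were nonzero, then by equivariance of `∂` the coefficient
of `gⁱ • a` in `∂(gⁱ⁺¹ • b)` would be nonzero for every `i`. Since `g` permutes the finite basis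
`Ωₙ₊₁` and moves `b`, the orbit `b, g • b, …, gᵐ⁻¹ • b` has length `m ≥ 2`, and the matched pairs
`(gⁱ • a, gⁱ • b) ∈ M` then form an alternating cycle, contradicting acyclicity.
-/

namespace Function

variable {α : Type*} {f : α → α} {x : α}

theorem one_lt_minimalPeriod (hx : x ∈ periodicPts f) (hfx : f x ≠ x) : 1 < minimalPeriod f x := by
  refine lt_of_le_of_ne (minimalPeriod_pos_of_mem_periodicPts hx) fun h => hfx ?_
  exact minimalPeriod_eq_one_iff_isFixedPt.mp h.symm

theorem injective_iterate_zmodVal (hx : x ∈ periodicPts f) :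
    Injective fun i : ZMod (minimalPeriod f x) => f^[i.val] x := by
  have : NeZero (minimalPeriod f x) := ⟨(minimalPeriod_pos_of_mem_periodicPts hx).ne'⟩
  intro i j hij
  exact ZMod.val_injective _ <|
    iterate_injOn_Iio_minimalPeriod (ZMod.val_lt i) (ZMod.val_lt j) hij

theorem iterate_zmodVal_add_one (hx : x ∈ periodicPts f) (i : ZMod (minimalPeriod f x)) :
    f^[(i + 1).val] x = f (f^[i.val] x) := by
  have : NeZero (minimalPeriod f x) := ⟨(minimalPeriod_pos_of_mem_periodicPts hx).ne'⟩
  rw [← iterate_succ_apply' f i.val x, ← iterate_mod_minimalPeriod_eq (n := i.val.succ),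
    ZMod.val_add, ZMod.val_one_eq_one_mod, Nat.add_mod_mod]

end Function

theorem Module.Basis.repr_apply_of_map_basis {ι ι' R V W : Type*} [Semiring R]
    [AddCommMonoid V] [AddCommMonoid W] [Module R V] [Module R W]
    (Ω : Module.Basis ι R V) (Ω' : Module.Basis ι' R W) (A : V →ₗ[R] W) {τ : ι → ι'}
    (hτ : Function.Injective τ) (hA : ∀ i, A (Ω i) = Ω' (τ i)) (x : V) (j : ι) :
    Ω'.repr (A x) (τ j) = Ω.repr x j := by
  have hmaps : (Finsupp.lapply (τ j)) ∘ₗ Ω'.repr.toLinearMap ∘ₗ A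
      = (Finsupp.lapply j) ∘ₗ Ω.repr.toLinearMap := by
    refine Ω.ext fun i => ?_
    simp [hA, Finsupp.single_apply_left hτ]
  exact LinearMap.congr_fun hmaps x

section ActionFamily

variable {G α : Type*} {σ : G → α → α}

theorem iterate_eq_pow_of_map_mul [Monoid G] (hone : ∀ i, σ 1 i = i)
    (hmul : ∀ g h i, σ (g * h) i = σ g (σ h i)) (g : G) (k : ℕ) : (σ g)^[k] = σ (g ^ k) := by
  induction k with
  | zero => funext i; simp [hone]
  | succ k ih => funext i; rw [Function.iterate_succ_apply', ih, pow_succ', hmul]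

theorem injective_of_map_mul [Group G] (hone : ∀ i, σ 1 i = i)
    (hmul : ∀ g h i, σ (g * h) i = σ g (σ h i)) (g : G) : Function.Injective (σ g) :=
  Function.LeftInverse.injective (g := σ g⁻¹) fun i => by rw [← hmul, inv_mul_cancel, hone]

end ActionFamily

theorem stmt6_general {R G : Type} [CommRing R] [Group G]
    (ι : ℤ → Type) [∀ n, Fintype (ι n)]
    (C : ℤ → Type) [∀ n, AddCommGroup (C n)] [∀ n, Module R (C n)]
    (Ω : ∀ n, Module.Basis (ι n) R (C n))
    (d : ∀ n : ℤ, C (n + 1) →ₗ[R] C n)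
    (σ : G → ∀ n, ι n → ι n)
    (hσone : ∀ n (i : ι n), σ 1 n i = i)
    (hσmul : ∀ g h n (i : ι n), σ (g * h) n i = σ g n (σ h n i))
    (A : G → ∀ n, C n →ₗ[R] C n)
    (hA : ∀ g n (i : ι n), A g n (Ω n i) = Ω n (σ g n i))
    (hchain : ∀ g n, (d n) ∘ₗ (A g (n + 1)) = (A g n) ∘ₗ (d n))
    (M : Set ((Σ n, ι n) × (Σ n, ι n)))
    -- acyclicity
    (hacyclic : ¬ ∃ (m : ℕ) (_ : 2 ≤ m) (p q : ZMod m → Σ n, ι n),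
      (∀ i, (p i, q i) ∈ M) ∧ Function.Injective q ∧
      ∀ i, ∃ h : (q (i + 1)).1 = (p i).1 + 1,
        (Ω (p i).1).repr (d (p i).1 (h ▸ (Ω (q (i + 1)).1) (q (i + 1)).2))
          (p i).2 ≠ 0)
    -- G-equivariance of M
    (hGM : ∀ e ∈ M, ∀ g : G,
      ((⟨e.1.1, σ g e.1.1 e.1.2⟩ : Σ n, ι n),
       (⟨e.2.1, σ g e.2.1 e.2.2⟩ : Σ n, ι n)) ∈ M)
    (n : ℤ) (a : ι n) (b : ι (n + 1))
    (hab : ((⟨n, a⟩ : Σ n, ι n), (⟨n + 1, b⟩ : Σ n, ι n)) ∈ M)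
    (g : G) (hgb : σ g (n + 1) b ≠ b) :
    (Ω n).repr (d n (Ω (n + 1) (σ g (n + 1) b))) a = 0 := by
  have hinj k :=
    injective_of_map_mul (σ := fun g => σ g k) (hσone k) (fun g h => hσmul g h k)
  have hpow k :=
    iterate_eq_pow_of_map_mul (σ := fun g => σ g k) (hσone k) (fun g h => hσmul g h k)
  have hcoeff (h : G) (x : ι (n + 1)) (j : ι n) :
      (Ω n).repr (d n (Ω (n + 1) (σ h (n + 1) x))) (σ h n j)
        = (Ω n).repr (d n (Ω (n + 1) x)) j := by
    rw [← hA, ← LinearMap.comp_apply, hchain, LinearMap.comp_apply,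
      Module.Basis.repr_apply_of_map_basis (Ω n) (Ω n) _ (hinj n h) (hA h n)]
  have hb : b ∈ Function.periodicPts (σ g (n + 1)) := (hinj (n + 1) g).mem_periodicPts b
  by_contra hne
  refine hacyclic ⟨_, Function.one_lt_minimalPeriod hb hgb,
    fun i => ⟨n, (σ g n)^[i.val] a⟩, fun i => ⟨n + 1, (σ g (n + 1))^[i.val] b⟩,
    fun i => ?_, sigma_mk_injective.comp (Function.injective_iterate_zmodVal hb),
    fun i => ⟨rfl, ?_⟩⟩
  · simpa only [hpow] using hGM _ hab (g ^ i.val)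
  · show (Ω n).repr (d n (Ω (n + 1) ((σ g (n + 1))^[(i + 1).val] b))) ((σ g n)^[i.val] a) ≠ 0
    rwa [Function.iterate_zmodVal_add_one hb, hpow, hpow, ← hσmul, ← pow_succ', pow_succ, hσmul,
      hcoeff]

/-- Equivariant acyclic matching with invertible weights on `P(C,Ω)`:
for a matched pair `(a,b)` with `b ∈ Ωₙ₊₁` and any `g ∈ G` with `g • b ≠ b`,
the coefficient of `a` in `∂(g • b)` vanishes. -/
theorem stmt6 {R G : Type} [CommRing R] [Group G] [Finite G]
    (ι : ℤ → Type) [∀ n, Fintype (ι n)]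
    (C : ℤ → Type) [∀ n, AddCommGroup (C n)] [∀ n, Module R (C n)]
    (Ω : ∀ n, Module.Basis (ι n) R (C n))
    (d : ∀ n : ℤ, C (n + 1) →ₗ[R] C n)
    (hdd : ∀ n, (d n) ∘ₗ (d (n + 1)) = 0)
    (σ : G → ∀ n, ι n → ι n)
    (hσone : ∀ n (i : ι n), σ 1 n i = i)
    (hσmul : ∀ g h n (i : ι n), σ (g * h) n i = σ g n (σ h n i))
    (A : G → ∀ n, C n →ₗ[R] C n)
    (hA : ∀ g n (i : ι n), A g n (Ω n i) = Ω n (σ g n i))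
    (hchain : ∀ g n, (d n) ∘ₗ (A g (n + 1)) = (A g n) ∘ₗ (d n))
    (M : Set ((Σ n, ι n) × (Σ n, ι n)))
    -- matched pairs are covering pairs of the poset P(C,Ω)
    (hstep : ∀ e ∈ M, ∃ h : e.2.1 = e.1.1 + 1,
      (Ω e.1.1).repr (d e.1.1 (h ▸ (Ω e.2.1) e.2.2)) e.1.2 ≠ 0)
    -- each element appears in at most one matched pair
    (hdisj : ∀ e ∈ M, ∀ e' ∈ M, e ≠ e' →
      e.1 ≠ e'.1 ∧ e.1 ≠ e'.2 ∧ e.2 ≠ e'.1 ∧ e.2 ≠ e'.2)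
    -- acyclicity
    (hacyclic : ¬ ∃ (m : ℕ) (_ : 2 ≤ m) (p q : ZMod m → Σ n, ι n),
      (∀ i, (p i, q i) ∈ M) ∧ Function.Injective q ∧
      ∀ i, ∃ h : (q (i + 1)).1 = (p i).1 + 1,
        (Ω (p i).1).repr (d (p i).1 (h ▸ (Ω (q (i + 1)).1) (q (i + 1)).2))
          (p i).2 ≠ 0)
    -- G-equivariance of M
    (hGM : ∀ e ∈ M, ∀ g : G,
      ((⟨e.1.1, σ g e.1.1 e.1.2⟩ : Σ n, ι n),
       (⟨e.2.1, σ g e.2.1 e.2.2⟩ : Σ n, ι n)) ∈ M)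
    -- the weights of matched pairs are invertible
    (hunit : ∀ e ∈ M, ∀ h : e.2.1 = e.1.1 + 1,
      IsUnit ((Ω e.1.1).repr (d e.1.1 (h ▸ (Ω e.2.1) e.2.2)) e.1.2))
    (n : ℤ) (a : ι n) (b : ι (n + 1))
    (hab : ((⟨n, a⟩ : Σ n, ι n), (⟨n + 1, b⟩ : Σ n, ι n)) ∈ M)
    (g : G) (hgb : σ g (n + 1) b ≠ b) :
    (Ω n).repr (d n (Ω (n + 1) (σ g (n + 1) b))) a = 0 :=
  stmt6_general ι C Ω d σ hσone hσmul A hA hchain M hacyclic hGM n a b hab g hgb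
end

section
/- Let G be a finite group acting on a finitely generated free chain complex C_* over a commutative ring R preserving the basis Ω, and let (a,b) be a pair with b ∈ Ωₙ, a ∈ Ωₙ₋₁, such that w(b ≻ a) = k_a(∂b) is invertible in R and k_a(∂(g·b)) = 0 whenever g·b ≠ b. Then the restriction ∂ₙ^{Gb} : span(G·b) → span(G·∂b) of the differential to the span of the orbit of b is an isomorphism of R-modules. -/
/-!
Surjectivity holds because `∂` commutes with the action, so it maps the orbit of `b` onto the
orbit of `∂b`. For injectivity, the functional `φ = k_a ∘ ∂` sees `b` with the unit weight `w`
and no other point of the orbit of `b`; hence `φ(h⁻¹ • x) = w · (coefficient of h • b in x)` for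
`x` in the span of the orbit. A cycle `x` has `∂(h⁻¹ • x) = h⁻¹ • ∂x = 0`, so all its coefficients
on the orbit vanish, and it has none off the orbit.
-/

open Submodule

theorem Submodule.map_span_range_of_comp_eq {R G M N : Type*} [CommRing R]
    [AddCommGroup M] [Module R M] [AddCommGroup N] [Module R N]
    {f : M →ₗ[R] N} {A : G → M →ₗ[R] M} {B : G → N →ₗ[R] N}
    (hfA : ∀ g, f ∘ₗ A g = B g ∘ₗ f) (v : M) :
    (span R (Set.range fun g => A g v)).map f = span R (Set.range fun g => B g (f v)) := by
  rw [map_span, ← Set.range_comp]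
  congr 2
  ext g
  exact LinearMap.congr_fun (hfA g) v

namespace OrbitSpan

variable {R G ι M N : Type*} [CommRing R] [Group G] [MulAction G ι]
  [AddCommGroup M] [Module R M] [AddCommGroup N] [Module R N]

theorem range_apply_basis_eq_image_orbit (Ω : Module.Basis ι R M) (A : G → M →ₗ[R] M)
    (hA : ∀ g i, A g (Ω i) = Ω (g • i)) (b : ι) :
    Set.range (fun g => A g (Ω b)) = Ω '' MulAction.orbit G b := by
  simp only [hA, MulAction.orbit, ← Set.range_comp, Function.comp_def]

theorem apply_inv_eq_mul_repr [DecidableEq ι] (Ω : Module.Basis ι R M) (A : G → M →ₗ[R] M)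
    (hA : ∀ g i, A g (Ω i) = Ω (g • i)) (φ : M →ₗ[R] R) (b : ι)
    (hzero : ∀ g : G, g • b ≠ b → φ (Ω (g • b)) = 0) (h : G) {x : M}
    (hx : x ∈ span R (Ω '' MulAction.orbit G b)) :
    φ (A h⁻¹ x) = φ (Ω b) * Ω.repr x (h • b) := by
  refine LinearMap.eqOn_span (f := φ ∘ₗ A h⁻¹) (g := φ (Ω b) • (Ω.coord (h • b))) ?_ hx
  rintro _ ⟨_, ⟨g, rfl⟩, rfl⟩
  simp only [LinearMap.comp_apply, LinearMap.smul_apply, Module.Basis.coord_apply,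
    Module.Basis.repr_self, Finsupp.single_apply, smul_eq_mul, hA, ← mul_smul]
  have hiff : (h⁻¹ * g) • b = b ↔ g • b = h • b := by rw [mul_smul, inv_smul_eq_iff]
  by_cases hg : (h⁻¹ * g) • b = b
  · rw [hg, if_pos (hiff.mp hg), mul_one]
  · rw [hzero _ hg, if_neg (hiff.not.mp hg), mul_zero]

theorem eq_zero_of_mem_span_orbit (Ω : Module.Basis ι R M) (A : G → M →ₗ[R] M)
    (hA : ∀ g i, A g (Ω i) = Ω (g • i)) (φ : M →ₗ[R] R) (b : ι) (hunit : IsUnit (φ (Ω b)))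
    (hzero : ∀ g : G, g • b ≠ b → φ (Ω (g • b)) = 0) {x : M}
    (hx : x ∈ span R (Ω '' MulAction.orbit G b)) (hφx : ∀ g, φ (A g x) = 0) : x = 0 := by
  classical
  refine Ω.ext_elem_iff.mpr fun i => ?_
  rw [map_zero, Finsupp.zero_apply]
  by_cases hi : i ∈ MulAction.orbit G b
  · obtain ⟨h, rfl⟩ := hi
    refine hunit.mul_left_cancel ?_
    rw [← apply_inv_eq_mul_repr Ω A hA φ b hzero h hx, hφx, mul_zero]
  · exact Finsupp.notMem_support_iff.mp fun hs => hi (Ω.mem_span_image.mp hx hs)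

theorem restrict_span_orbit_bijective (Ω : Module.Basis ι R M) (A : G → M →ₗ[R] M) (B : G → N →ₗ[R] N)
    (hA : ∀ g i, A g (Ω i) = Ω (g • i)) (f : M →ₗ[R] N) (hfA : ∀ g, f ∘ₗ A g = B g ∘ₗ f)
    (ψ : N →ₗ[R] R) (b : ι) (hunit : IsUnit (ψ (f (Ω b))))
    (hzero : ∀ g : G, g • b ≠ b → ψ (f (Ω (g • b))) = 0)
    (hmaps : ∀ x ∈ span R (Set.range fun g => A g (Ω b)),
      f x ∈ span R (Set.range fun g => B g (f (Ω b)))) :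
    Function.Bijective (f.restrict hmaps) := by
  refine ⟨(injective_iff_map_eq_zero _).mpr fun ⟨x, hx⟩ hfx => ?_, fun ⟨y, hy⟩ => ?_⟩
  · have hfx : f x = 0 := congrArg Subtype.val hfx
    rw [range_apply_basis_eq_image_orbit Ω A hA] at hx
    refine Subtype.ext (eq_zero_of_mem_span_orbit Ω A hA (ψ ∘ₗ f) b hunit hzero hx fun g => ?_)
    rw [LinearMap.comp_apply, ← LinearMap.comp_apply f, hfA, LinearMap.comp_apply, hfx,
      map_zero, map_zero]
  · rw [← map_span_range_of_comp_eq hfA] at hy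
    obtain ⟨x, hx, rfl⟩ := hy
    exact ⟨⟨x, hx⟩, rfl⟩

end OrbitSpan

theorem stmt7_general {R G : Type} [CommRing R] [Group G]
    (ι : ℤ → Type)
    (C : ℤ → Type) [∀ n, AddCommGroup (C n)] [∀ n, Module R (C n)]
    (Ω : ∀ n, Module.Basis (ι n) R (C n))
    (d : ∀ n : ℤ, C (n + 1) →ₗ[R] C n)
    (σ : G → ∀ n, ι n → ι n)
    (hσone : ∀ n (i : ι n), σ 1 n i = i)
    (hσmul : ∀ g h n (i : ι n), σ (g * h) n i = σ g n (σ h n i))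
    (A : G → ∀ n, C n →ₗ[R] C n)
    (hA : ∀ g n (i : ι n), A g n (Ω n i) = Ω n (σ g n i))
    (hchain : ∀ g n, (d n) ∘ₗ (A g (n + 1)) = (A g n) ∘ₗ (d n))
    (n : ℤ) (a : ι n) (b : ι (n + 1))
    (hunit : IsUnit ((Ω n).repr (d n (Ω (n + 1) b)) a))
    (hzero : ∀ g : G, σ g (n + 1) b ≠ b →
      (Ω n).repr (d n (Ω (n + 1) (σ g (n + 1) b))) a = 0)
    (hmaps : ∀ x ∈ Submodule.span R
        (Set.range fun g : G => A g (n + 1) (Ω (n + 1) b)),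
      d n x ∈ Submodule.span R (Set.range fun g : G => A g n (d n (Ω (n + 1) b)))) :
    Function.Bijective ((d n).restrict hmaps) := by
  let _ : MulAction G (ι (n + 1)) :=
    { smul g := σ g (n + 1)
      one_smul := hσone (n + 1)
      mul_smul g h := hσmul g h (n + 1) }
  exact OrbitSpan.restrict_span_orbit_bijective (Ω (n + 1)) (fun g => A g (n + 1)) (fun g => A g n)
    (fun g => hA g (n + 1)) (d n) (fun g => hchain g n) ((Ω n).coord a) b hunit hzero hmaps

/-- If `(a,b)` has invertible weight `w(b ≻ a)` and `k_a(∂(g•b)) = 0` whenever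
`g•b ≠ b`, then the restriction `∂ₙ^{Gb} : span(G•b) → span(G•∂b)` of the
differential is an isomorphism of `R`-modules. -/
theorem stmt7 {R G : Type} [CommRing R] [Group G] [Finite G]
    (ι : ℤ → Type) [∀ n, Fintype (ι n)]
    (C : ℤ → Type) [∀ n, AddCommGroup (C n)] [∀ n, Module R (C n)]
    (Ω : ∀ n, Module.Basis (ι n) R (C n))
    (d : ∀ n : ℤ, C (n + 1) →ₗ[R] C n)
    (hdd : ∀ n, (d n) ∘ₗ (d (n + 1)) = 0)
    (σ : G → ∀ n, ι n → ι n)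
    (hσone : ∀ n (i : ι n), σ 1 n i = i)
    (hσmul : ∀ g h n (i : ι n), σ (g * h) n i = σ g n (σ h n i))
    (A : G → ∀ n, C n →ₗ[R] C n)
    (hA : ∀ g n (i : ι n), A g n (Ω n i) = Ω n (σ g n i))
    (hchain : ∀ g n, (d n) ∘ₗ (A g (n + 1)) = (A g n) ∘ₗ (d n))
    (n : ℤ) (a : ι n) (b : ι (n + 1))
    (hunit : IsUnit ((Ω n).repr (d n (Ω (n + 1) b)) a))
    (hzero : ∀ g : G, σ g (n + 1) b ≠ b →
      (Ω n).repr (d n (Ω (n + 1) (σ g (n + 1) b))) a = 0)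
    (hmaps : ∀ x ∈ Submodule.span R
        (Set.range fun g : G => A g (n + 1) (Ω (n + 1) b)),
      d n x ∈ Submodule.span R (Set.range fun g : G => A g n (d n (Ω (n + 1) b)))) :
    Function.Bijective ((d n).restrict hmaps) :=
  stmt7_general ι C Ω d σ hσone hσmul A hA hchain n a b hunit hzero hmaps
end

section
/- Let G be a finite group acting on a finitely generated free chain complex C_* over a commutative ring R with G-invariant basis Ω, and let M be a G-equivariant acyclic matching on P(C_*, Ω) such that every weight w(b ≻ a) with (a,b) ∈ M is invertible in R. Then there exists a G-chain complex C_*^M and a G-equivariant chain isomorphism C_* ≅ C_*^M ⊕ T_*, where T_* = ⊕_{G(a,b) ∈ M/G} 𝒜(Gb) is the direct sum over orbits of matched pairs of the two-term complexes 𝒜(Gb) = (span(G·b) → span(G·∂b)). -/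
/-- A `G`-chain complex: a chain complex of `R`-modules with a `G`-action by
chain maps. -/
structure GChain (R G : Type) [CommRing R] [Group G] where
  X : ℤ → Type
  [addcommgroup : ∀ n, AddCommGroup (X n)]
  [module : ∀ n, Module R (X n)]
  d : ∀ n : ℤ, X (n + 1) →ₗ[R] X n
  dd : ∀ n, (d n) ∘ₗ (d (n + 1)) = 0
  ρ : G → ∀ n, X n →ₗ[R] X n
  ρ_one : ∀ n (x : X n), ρ 1 n x = x
  ρ_mul : ∀ g h n (x : X n), ρ (g * h) n x = ρ g n (ρ h n x)
  ρ_d : ∀ g n, (d n) ∘ₗ (ρ g (n + 1)) = (ρ g n) ∘ₗ (d n)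

attribute [instance] GChain.addcommgroup GChain.module

/-- The degree-`n` part of `T_* = ⊕_{G(a,b) ∈ M/G} 𝒜(Gb)`, realized as the
subcomplex of `C_*` spanned in degree `n` by the `G`-orbits of the upper
elements `b` of matched pairs of degree `n` together with the `G`-orbits of
`∂b` for upper elements `b` of degree `n+1`.  (Since `M` is `G`-equivariant,
this span is exactly `⊕ span(G•b) ⊕ ⊕ span(G•∂b)`.) -/
def TT {R : Type} [CommRing R] {ι : ℤ → Type}
    {C : ℤ → Type} [∀ n, AddCommGroup (C n)] [∀ n, Module R (C n)]
    (Ω : ∀ n, Module.Basis (ι n) R (C n)) (d : ∀ n : ℤ, C (n + 1) →ₗ[R] C n)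
    (M : Set ((Σ n, ι n) × (Σ n, ι n))) (n : ℤ) : Submodule R (C n) :=
  Submodule.span R
    ({x | ∃ i : ι n, (∃ a, (a, (⟨n, i⟩ : Σ n, ι n)) ∈ M) ∧ x = Ω n i} ∪
     {x | ∃ j : ι (n + 1), (∃ a, (a, (⟨n + 1, j⟩ : Σ n, ι n)) ∈ M) ∧
       x = d n (Ω (n + 1) j)})

/-!
In degree `n`, replace each lower element `a` of a matched pair `(a, b)` by `∂b`. By acyclicity
the matrix of this new family in the basis `Ω` is triangular for a linear extension of its
off-diagonal support, and its diagonal consists of the weights `w(b ≻ a)` and ones, so the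
family is again a basis. Let `η : C_n → C_{n+1}` send `∂b` to `b` and the other new basis
vectors to `0`. Then `π = ∂η + η∂` commutes with `∂` and, since `M` is `G`-equivariant, with `G`;
it maps `C_*` into the span `T_*` of the `b` and the `∂b`, and it fixes `T_*`. Hence
`x ↦ ([x], π x)` is a `G`-chain isomorphism `C_* ≅ C_*/T_* ⊕ T_*`, and `C_*^M = C_*/T_*`.
-/

namespace Relation

variable {α : Type*} {r : α → α → Prop}

theorem TransGen.exists_path {a b : α} (h : TransGen r a b) :
    ∃ (k : ℕ) (f : ℕ → α), 0 < k ∧ f 0 = a ∧ f k = b ∧ ∀ i < k, r (f i) (f (i + 1)) := by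
  induction h with
  | @single c hab => exact ⟨1, fun i => if i = 0 then a else c, one_pos, rfl, rfl, by simpa⟩
  | @tail _ c _ hbc ih =>
    obtain ⟨k, f, hk, hf0, hfk, hf⟩ := ih
    refine ⟨k + 1, Function.update f (k + 1) c, k.succ_pos, ?_, by simp, fun i hi => ?_⟩
    · rwa [Function.update_of_ne (by omega)]
    · rw [Function.update_of_ne (by omega)]
      rcases Nat.lt_succ_iff_lt_or_eq.mp hi with hi | rfl
      · rw [Function.update_of_ne (by omega)]
        exact hf i hi
      · rw [Function.update_self, hfk]
        exact hbc

theorem injOn_of_shortest_closed_path {k : ℕ} {f : ℕ → α} (hf : ∀ i < k, r (f i) (f (i + 1)))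
    (hmin : ∀ l, 0 < l → l < k → ∀ g : ℕ → α, g 0 = g l → ¬ ∀ i < l, r (g i) (g (i + 1))) :
    Set.InjOn f (Set.Iio k) := by
  suffices ∀ i j, i < j → j < k → f i ≠ f j by
    intro i hi j hj hij
    by_contra hne
    rcases Nat.lt_or_gt_of_ne hne with h | h
    exacts [this i j h hj hij, this j i h hi hij.symm]
  intro i j hij hjk heq
  refine hmin (j - i) (by omega) (by omega) (fun t => f (i + t)) ?_ fun t ht => ?_
  · simpa [Nat.add_sub_cancel' hij.le] using heq
  · simpa [Nat.add_assoc] using hf (i + t) (by omega)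

theorem exists_zmod_cycle_of_closed_path {k : ℕ} [NeZero k] {f : ℕ → α} (hf0 : f 0 = f k)
    (hf : ∀ i < k, r (f i) (f (i + 1))) (hinj : Set.InjOn f (Set.Iio k)) :
    ∃ g : ZMod k → α, Function.Injective g ∧ ∀ t, r (g t) (g (t + 1)) := by
  refine ⟨fun t => f t.val,
    fun s t h => ZMod.val_injective k (hinj (ZMod.val_lt s) (ZMod.val_lt t) h), fun t => ?_⟩
  have hnext : f (t + 1).val = f (t.val + 1) := by
    rw [ZMod.val_add, ZMod.val_one_eq_one_mod, Nat.add_mod_mod]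
    rcases Nat.lt_or_ge (t.val + 1) k with h | h
    · rw [Nat.mod_eq_of_lt h]
    · rw [show t.val + 1 = k from le_antisymm (ZMod.val_lt t) h, Nat.mod_self, hf0]
  simpa only [hnext] using hf _ (ZMod.val_lt t)

theorem TransGen.exists_injective_cycle (hr : ∀ a, ¬ r a a) {x : α} (h : TransGen r x x) :
    ∃ (m : ℕ) (_ : 2 ≤ m) (g : ZMod m → α), Function.Injective g ∧ ∀ t, r (g t) (g (t + 1)) := by
  classical
  have hex : ∃ k, 0 < k ∧ ∃ f : ℕ → α, f 0 = f k ∧ ∀ i < k, r (f i) (f (i + 1)) := by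
    obtain ⟨k, f, hk, hf0, hfk, hf⟩ := h.exists_path
    exact ⟨k, hk, f, hf0.trans hfk.symm, hf⟩
  obtain ⟨hk, f, hf0, hf⟩ := Nat.find_spec hex
  have hmin : ∀ l, 0 < l → l < Nat.find hex → ∀ g : ℕ → α, g 0 = g l →
      ¬ ∀ i < l, r (g i) (g (i + 1)) :=
    fun l hl hlk g hg hgr => Nat.find_min hex hlk ⟨hl, g, hg, hgr⟩
  have h2 : 2 ≤ Nat.find hex := by
    by_contra! h1
    have h1 : Nat.find hex = 1 := by omega
    exact hr (f 0) (by simpa [hf0, h1] using hf 0 (by omega))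
  have : NeZero (Nat.find hex) := ⟨by omega⟩
  exact ⟨_, h2, exists_zmod_cycle_of_closed_path hf0 hf (injOn_of_shortest_closed_path hf hmin)⟩

end Relation

open Relation in
theorem Matrix.isUnit_det_of_acyclic {n R : Type*} [Fintype n] [DecidableEq n] [CommRing R]
    (P : Matrix n n R) (hP : ∀ i, ¬ TransGen (fun i j => i ≠ j ∧ P i j ≠ 0) i i)
    (hdiag : ∀ i, IsUnit (P i i)) : IsUnit P.det := by
  -- Reachability in the support digraph is a partial order, and `P` is upper triangular for
  -- any linear extension of it.
  let _ : PartialOrder n :=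
    { le := ReflTransGen (fun i j => i ≠ j ∧ P i j ≠ 0)
      le_refl := fun _ => .refl
      le_trans := fun _ _ _ => ReflTransGen.trans
      le_antisymm := fun i j hij hji => by
        by_contra hne
        obtain hij | hij := reflTransGen_iff_eq_or_transGen.mp hij
        · exact hne hij.symm
        · obtain hji | hji := reflTransGen_iff_eq_or_transGen.mp hji
          · exact hne hji
          · exact hP i (hij.trans hji) }
  let _ : Fintype (LinearExtension n) := inferInstanceAs (Fintype n)
  let _ : DecidableEq (LinearExtension n) := inferInstanceAs (DecidableEq n)
  let Q : Matrix (LinearExtension n) (LinearExtension n) R := P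
  have hupper : Q.IsUpperTriangular := by
    intro i j hji
    by_contra hne
    have hij : toLinearExtension (α := n) i ≤ toLinearExtension (α := n) j :=
      toLinearExtension.monotone (show @LE.le n _ i j from .single ⟨fun h => hji.ne h.symm, hne⟩)
    exact hij.not_gt hji
  change IsUnit Q.det
  rw [Matrix.det_of_isUpperTriangular hupper]
  exact IsUnit.prod_univ_iff.mpr hdiag

noncomputable def LinearMap.IsProj.quotientProdEquiv {R E : Type*} [Ring R] [AddCommGroup E]
    [Module R E] {T : Submodule R E} {p : E →ₗ[R] E} (hp : IsProj T p) : E ≃ₗ[R] (E ⧸ T) × T :=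
  LinearEquiv.ofBijective (T.mkQ.prod hp.codRestrict) <| by
    refine ⟨(injective_iff_map_eq_zero _).mpr fun x hx => ?_, fun ⟨y, t⟩ => ?_⟩
    · have hxT : x ∈ T := (Submodule.Quotient.mk_eq_zero T).mp congr($hx.1)
      simpa [hp.map_id x hxT] using congr(($hx.2 : E))
    · obtain ⟨x, rfl⟩ := T.mkQ_surjective y
      refine ⟨x - p x + t, Prod.ext ?_ (Subtype.ext ?_)⟩
      · simp [(Submodule.Quotient.mk_eq_zero T).mpr (hp.map_mem x),
          (Submodule.Quotient.mk_eq_zero T).mpr t.2]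
      · simp [hp.map_id _ (hp.map_mem x)]

def Int.ofAddOne {E : ℤ → Sort*} (f : ∀ m, E (m + 1)) (n : ℤ) : E n :=
  cast (congrArg E (Int.sub_add_cancel n 1)) (f (n - 1))

theorem Int.ofAddOne_add_one {E : ℤ → Sort*} (f : ∀ m, E (m + 1)) (m : ℤ) :
    Int.ofAddOne f (m + 1) = f m := by
  have key : ∀ k (hk : k = m) (h : E (k + 1) = E (m + 1)), cast h (f k) = f m := by
    rintro _ rfl _
    rfl
  exact key _ (by omega) _

namespace GChain

variable {R G : Type} [CommRing R] [Group G]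

structure IsBasisAction {ι C : ℤ → Type} [∀ n, AddCommGroup (C n)] [∀ n, Module R (C n)]
    (Ω : ∀ n, Module.Basis (ι n) R (C n)) (d : ∀ n : ℤ, C (n + 1) →ₗ[R] C n)
    (σ : G → ∀ n, ι n → ι n) (A : G → ∀ n, C n →ₗ[R] C n) : Prop where
  σ_one : ∀ n (i : ι n), σ 1 n i = i
  σ_mul : ∀ g h n (i : ι n), σ (g * h) n i = σ g n (σ h n i)
  map_basis : ∀ g n (i : ι n), A g n (Ω n i) = Ω n (σ g n i)
  d_comp_map : ∀ g n, d n ∘ₗ A g (n + 1) = A g n ∘ₗ d n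

def ofBasisAction {ι C : ℤ → Type} [∀ n, AddCommGroup (C n)] [∀ n, Module R (C n)]
    {Ω : ∀ n, Module.Basis (ι n) R (C n)} {d : ∀ n : ℤ, C (n + 1) →ₗ[R] C n}
    (hdd : ∀ n, d n ∘ₗ d (n + 1) = 0) {σ : G → ∀ n, ι n → ι n} {A : G → ∀ n, C n →ₗ[R] C n}
    (hact : IsBasisAction Ω d σ A) : GChain R G where
  X := C
  d := d
  dd := hdd
  ρ := A
  ρ_one n x := by
    rw [show A 1 n = LinearMap.id from
      (Ω n).ext fun i => by rw [hact.map_basis, hact.σ_one]; rfl]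
    rfl
  ρ_mul g h n x := by
    rw [show A (g * h) n = A g n ∘ₗ A h n from
      (Ω n).ext fun i => by simp [hact.map_basis, hact.σ_mul]]
    rfl
  ρ_d := hact.d_comp_map

noncomputable def quotient (D : GChain R G) (T : ∀ n, Submodule R (D.X n))
    (hT : ∀ n, ∀ x ∈ T (n + 1), D.d n x ∈ T n) (hGT : ∀ g n, ∀ x ∈ T n, D.ρ g n x ∈ T n) :
    GChain R G where
  X n := D.X n ⧸ T n
  d n := (T (n + 1)).mapQ (T n) (D.d n) (hT n)
  dd n := by
    ext x
    simpa using congr(Submodule.Quotient.mk (p := T n) ($(D.dd n) x))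
  ρ g n := (T n).mapQ (T n) (D.ρ g n) (hGT g n)
  ρ_one n x := by
    induction x using Submodule.Quotient.induction_on
    simp [D.ρ_one]
  ρ_mul g h n x := by
    induction x using Submodule.Quotient.induction_on
    simp [D.ρ_mul]
  ρ_d g n := by
    ext x
    simpa using congr(Submodule.Quotient.mk (p := T n) ($(D.ρ_d g n) x))

theorem exists_splitting_of_isProj (D : GChain R G) (T : ∀ n, Submodule R (D.X n))
    (hT : ∀ n, ∀ x ∈ T (n + 1), D.d n x ∈ T n) (hGT : ∀ g n, ∀ x ∈ T n, D.ρ g n x ∈ T n)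
    (p : ∀ n, D.X n →ₗ[R] D.X n) (hp : ∀ n, LinearMap.IsProj (T n) (p n))
    (hpd : ∀ n x, p n (D.d n x) = D.d n (p (n + 1) x))
    (hpρ : ∀ g n x, p n (D.ρ g n x) = D.ρ g n (p n x)) :
    ∃ (E : GChain R G) (e : ∀ n, D.X n ≃ₗ[R] E.X n × T n),
      (∀ n x, e n (D.d n x) = (E.d n (e (n + 1) x).1, (D.d n).restrict (hT n) (e (n + 1) x).2)) ∧
      (∀ g n x, e n (D.ρ g n x) = (E.ρ g n (e n x).1, (D.ρ g n).restrict (hGT g n) (e n x).2)) :=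
  ⟨D.quotient T hT hGT, fun n => (hp n).quotientProdEquiv,
    fun n x => Prod.ext rfl (Subtype.ext (hpd n x)),
    fun g n x => Prod.ext rfl (Subtype.ext (hpρ g n x))⟩

end GChain

namespace AlgebraicMorse

def IsMatching {α : Type*} (M : Set (α × α)) : Prop :=
  ∀ e ∈ M, ∀ e' ∈ M, e ≠ e' → e.1 ≠ e'.1 ∧ e.1 ≠ e'.2 ∧ e.2 ≠ e'.1 ∧ e.2 ≠ e'.2

namespace IsMatching

variable {α : Type*} {M : Set (α × α)} {e e' : α × α}

theorem eq_of_fst_eq (hM : IsMatching M) (he : e ∈ M) (he' : e' ∈ M) (h : e.1 = e'.1) :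
    e = e' := by
  by_contra hne
  exact (hM e he e' he' hne).1 h

theorem eq_of_snd_eq (hM : IsMatching M) (he : e ∈ M) (he' : e' ∈ M) (h : e.2 = e'.2) :
    e = e' := by
  by_contra hne
  exact (hM e he e' he' hne).2.2.2 h

theorem eq_of_fst_eq_snd (hM : IsMatching M) (he : e ∈ M) (he' : e' ∈ M) (h : e.1 = e'.2) :
    e = e' := by
  by_contra hne
  exact (hM e he e' he' hne).2.1 h

end IsMatching

variable {ι : ℤ → Type} (M : Set ((Σ n, ι n) × (Σ n, ι n)))

def IsLower (n : ℤ) (i : ι n) : Prop :=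
  ∃ j : ι (n + 1), ((⟨n, i⟩ : Σ n, ι n), (⟨n + 1, j⟩ : Σ n, ι n)) ∈ M

def IsUpper (n : ℤ) (j : ι n) : Prop :=
  ∃ a, (a, (⟨n, j⟩ : Σ n, ι n)) ∈ M

def IsInvariant {G : Type} (σ : G → ∀ n, ι n → ι n) : Prop :=
  ∀ e ∈ M, ∀ g : G,
    ((⟨e.1.1, σ g e.1.1 e.1.2⟩ : Σ n, ι n), (⟨e.2.1, σ g e.2.1 e.2.2⟩ : Σ n, ι n)) ∈ M

variable {M} {n : ℤ} {i : ι n}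

noncomputable def partner (h : IsLower M n i) : ι (n + 1) := h.choose

theorem partner_mem (h : IsLower M n i) :
    ((⟨n, i⟩ : Σ n, ι n), (⟨n + 1, partner h⟩ : Σ n, ι n)) ∈ M :=
  h.choose_spec

theorem eq_partner (hM : IsMatching M) (h : IsLower M n i) {j : ι (n + 1)}
    (hj : ((⟨n, i⟩ : Σ n, ι n), (⟨n + 1, j⟩ : Σ n, ι n)) ∈ M) : j = partner h := by
  simpa using hM.eq_of_fst_eq hj (partner_mem h) rfl

theorem partner_injective (hM : IsMatching M) {i' : ι n} (h : IsLower M n i)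
    (h' : IsLower M n i') (he : partner h = partner h') : i = i' := by
  simpa using congrArg Prod.fst (hM.eq_of_snd_eq (partner_mem h) (partner_mem h') (by rw [he]))

theorem IsUpper.not_isLower (hM : IsMatching M) (hu : IsUpper M n i) : ¬ IsLower M n i := by
  rintro ⟨j, hj⟩
  obtain ⟨a, ha⟩ := hu
  have hdeg := congrArg (fun e => e.2.1) (hM.eq_of_fst_eq_snd hj ha rfl)
  simp only at hdeg
  omega

theorem IsUpper.exists_partner (hM : IsMatching M) (hdeg : ∀ e ∈ M, e.2.1 = e.1.1 + 1)
    {j : ι (n + 1)} (hu : IsUpper M (n + 1) j) :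
    ∃ (i : ι n) (h : IsLower M n i), partner h = j := by
  obtain ⟨⟨m, i⟩, ha⟩ := hu
  obtain rfl : m = n := by
    have := hdeg _ ha
    simp only at this
    omega
  exact ⟨i, ⟨j, ha⟩, (eq_partner hM _ ha).symm⟩

section Invariance

variable {G : Type} {σ : G → ∀ n, ι n → ι n}

theorem IsLower.map (hGM : IsInvariant M σ) (h : IsLower M n i) (g : G) :
    IsLower M n (σ g n i) :=
  ⟨_, hGM _ (partner_mem h) g⟩

theorem IsUpper.map (hGM : IsInvariant M σ) {j : ι n} (h : IsUpper M n j) (g : G) :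
    IsUpper M n (σ g n j) :=
  ⟨_, hGM _ h.choose_spec g⟩

theorem isLower_map_iff [Group G] (hGM : IsInvariant M σ) (hσone : ∀ n (i : ι n), σ 1 n i = i)
    (hσmul : ∀ g h n (i : ι n), σ (g * h) n i = σ g n (σ h n i)) (g : G) :
    IsLower M n (σ g n i) ↔ IsLower M n i := by
  refine ⟨fun h => ?_, fun h => h.map hGM g⟩
  simpa [← hσmul, hσone] using h.map hGM g⁻¹

theorem partner_map (hGM : IsInvariant M σ) (hM : IsMatching M) (h : IsLower M n i) (g : G) :
    partner (h.map hGM g) = σ g (n + 1) (partner h) :=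
  (eq_partner hM _ (hGM _ (partner_mem h) g)).symm

end Invariance

variable {R : Type} [CommRing R] {C : ℤ → Type} [∀ n, AddCommGroup (C n)] [∀ n, Module R (C n)]
  (Ω : ∀ n, Module.Basis (ι n) R (C n)) (d : ∀ n : ℤ, C (n + 1) →ₗ[R] C n)

section Basis

open Classical in
variable (M) in
noncomputable def morseVec (n : ℤ) (i : ι n) : C n :=
  if h : IsLower M n i then d n (Ω (n + 1) (partner h)) else Ω n i

theorem morseVec_of_isLower (h : IsLower M n i) :
    morseVec M Ω d n i = d n (Ω (n + 1) (partner h)) :=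
  dif_pos h

theorem morseVec_of_not_isLower (h : ¬ IsLower M n i) : morseVec M Ω d n i = Ω n i :=
  dif_neg h

variable (M) in
structure IsMorseMatching : Prop where
  isMatching : IsMatching M
  acyclic : ¬ ∃ (m : ℕ) (_ : 2 ≤ m) (p q : ZMod m → Σ n, ι n),
    (∀ i, (p i, q i) ∈ M) ∧ Function.Injective q ∧
    ∀ i, ∃ h : (q (i + 1)).1 = (p i).1 + 1,
      (Ω (p i).1).repr (d (p i).1 (h ▸ (Ω (q (i + 1)).1) (q (i + 1)).2)) (p i).2 ≠ 0
  isUnit : ∀ e ∈ M, ∀ h : e.2.1 = e.1.1 + 1,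
    IsUnit ((Ω e.1.1).repr (d e.1.1 (h ▸ (Ω e.2.1) e.2.2)) e.1.2)

theorem isLower_of_toMatrix_ne_zero {i j : ι n} (hij : i ≠ j)
    (h : (Ω n).toMatrix (morseVec M Ω d n) i j ≠ 0) : IsLower M n j := by
  by_contra hj
  simp [Module.Basis.toMatrix_apply, morseVec_of_not_isLower Ω d hj, Ne.symm hij] at h

theorem acyclic_toMatrix_morseVec (hM : IsMorseMatching M Ω d) (n : ℤ) (i : ι n) :
    ¬ Relation.TransGen (fun i j => i ≠ j ∧ (Ω n).toMatrix (morseVec M Ω d n) i j ≠ 0) i i := by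
  intro hcyc
  obtain ⟨m, hm, f, hf, hedge⟩ := hcyc.exists_injective_cycle fun _ h => h.1 rfl
  have hlow t : IsLower M n (f t) := by
    simpa using isLower_of_toMatrix_ne_zero Ω d (hedge (t - 1)).1 (hedge (t - 1)).2
  refine hM.acyclic ⟨m, hm, fun t => ⟨n, f t⟩, fun t => ⟨n + 1, partner (hlow t)⟩,
    fun t => partner_mem (hlow t), fun s t hst => hf ?_, fun t => ⟨rfl, ?_⟩⟩
  · exact partner_injective hM.isMatching _ _ (by simpa using hst)
  · simpa [Module.Basis.toMatrix_apply, morseVec_of_isLower Ω d (hlow (t + 1))] using (hedge t).2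

theorem isUnit_det_morseVec [Fintype (ι n)] [DecidableEq (ι n)] (hM : IsMorseMatching M Ω d) :
    IsUnit ((Ω n).det (morseVec M Ω d n)) := by
  rw [Module.Basis.det_apply]
  refine Matrix.isUnit_det_of_acyclic _ (acyclic_toMatrix_morseVec Ω d hM n) fun i => ?_
  rw [Module.Basis.toMatrix_apply]
  by_cases h : IsLower M n i
  · rw [morseVec_of_isLower Ω d h]
    exact hM.isUnit _ (partner_mem h) rfl
  · simp [morseVec_of_not_isLower Ω d h]

theorem map_morseVec {G : Type} [Group G] {σ : G → ∀ n, ι n → ι n}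
    {A : G → ∀ n, C n →ₗ[R] C n} (hGM : IsInvariant M σ) (hact : GChain.IsBasisAction Ω d σ A)
    (hM : IsMatching M) (g : G) (n : ℤ) (i : ι n) :
    A g n (morseVec M Ω d n i) = morseVec M Ω d n (σ g n i) := by
  by_cases h : IsLower M n i
  · rw [morseVec_of_isLower Ω d h, morseVec_of_isLower Ω d (h.map hGM g), partner_map hGM hM,
      ← hact.map_basis, ← LinearMap.comp_apply (A g n), ← hact.d_comp_map, LinearMap.comp_apply]
  · have h' := mt (isLower_map_iff hGM hact.σ_one hact.σ_mul g).mp h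
    rw [morseVec_of_not_isLower Ω d h, morseVec_of_not_isLower Ω d h', hact.map_basis]

variable [∀ n, Fintype (ι n)]

open Classical in
noncomputable def morseBasis (hM : IsMorseMatching M Ω d) (n : ℤ) : Module.Basis (ι n) R (C n) :=
  have h := (Ω n).is_basis_iff_det.mpr (isUnit_det_morseVec Ω d hM)
  .mk h.1 h.2.ge

theorem morseBasis_apply (hM : IsMorseMatching M Ω d) (n : ℤ) (i : ι n) :
    morseBasis Ω d hM n i = morseVec M Ω d n i := by
  simp [morseBasis]

end Basis

theorem span_upper_le_TT (n : ℤ) :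
    Submodule.span R {y | ∃ j, IsUpper M n j ∧ y = Ω n j} ≤ TT Ω d M n :=
  Submodule.span_mono Set.subset_union_left

theorem d_mem_TT (hdd : ∀ n, d n ∘ₗ d (n + 1) = 0) (n : ℤ) :
    ∀ x ∈ TT Ω d M (n + 1), d n x ∈ TT Ω d M n := by
  intro x hx
  refine (Submodule.map_span_le _ _ _).mpr ?_ (Submodule.mem_map_of_mem hx)
  rintro _ (⟨j, hj, rfl⟩ | ⟨j, -, rfl⟩)
  · exact Submodule.subset_span (Or.inr ⟨j, hj, rfl⟩)
  · rw [← LinearMap.comp_apply, hdd, LinearMap.zero_apply]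
    exact zero_mem _

theorem map_mem_TT {G : Type} {σ : G → ∀ n, ι n → ι n} (hGM : IsInvariant M σ)
    {A : G → ∀ n, C n →ₗ[R] C n} (hA : ∀ g n (i : ι n), A g n (Ω n i) = Ω n (σ g n i))
    (hchain : ∀ g n, d n ∘ₗ A g (n + 1) = A g n ∘ₗ d n) (g : G) (n : ℤ) :
    ∀ x ∈ TT Ω d M n, A g n x ∈ TT Ω d M n := by
  intro x hx
  refine (Submodule.map_span_le _ _ _).mpr ?_ (Submodule.mem_map_of_mem hx)
  rintro _ (⟨j, hj, rfl⟩ | ⟨j, hj, rfl⟩)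
  · rw [hA]
    exact Submodule.subset_span (Or.inl ⟨_, IsUpper.map hGM hj g, rfl⟩)
  · rw [← LinearMap.comp_apply, ← hchain, LinearMap.comp_apply, hA]
    exact Submodule.subset_span (Or.inr ⟨_, IsUpper.map hGM hj g, rfl⟩)

variable [∀ n, Fintype (ι n)]

open Classical in
noncomputable def morseHomotopy (hM : IsMorseMatching M Ω d) (n : ℤ) : C n →ₗ[R] C (n + 1) :=
  (morseBasis Ω d hM n).constr R fun i => if h : IsLower M n i then Ω (n + 1) (partner h) else 0

variable {Ω d} (hM : IsMorseMatching M Ω d)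

theorem morseHomotopy_d_partner (h : IsLower M n i) :
    morseHomotopy Ω d hM n (d n (Ω (n + 1) (partner h))) = Ω (n + 1) (partner h) := by
  rw [← morseVec_of_isLower Ω d h, ← morseBasis_apply Ω d hM, morseHomotopy,
    Module.Basis.constr_basis, dif_pos h]

theorem morseHomotopy_of_not_isLower (h : ¬ IsLower M n i) :
    morseHomotopy Ω d hM n (Ω n i) = 0 := by
  rw [← morseVec_of_not_isLower Ω d h, ← morseBasis_apply Ω d hM, morseHomotopy,
    Module.Basis.constr_basis, dif_neg h]

theorem morseHomotopy_mem_span_upper (x : C n) :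
    morseHomotopy Ω d hM n x ∈
      Submodule.span R {y | ∃ j, IsUpper M (n + 1) j ∧ y = Ω (n + 1) j} := by
  refine Submodule.span_le.mpr ?_
    ((Module.Basis.constr_range _ _).le (LinearMap.mem_range_self _ x))
  rintro _ ⟨i, rfl⟩
  dsimp only
  split_ifs with h
  · exact Submodule.subset_span ⟨_, ⟨_, partner_mem h⟩, rfl⟩
  · exact zero_mem _

theorem morseHomotopy_comp_map {G : Type} [Group G] {σ : G → ∀ n, ι n → ι n}
    {A : G → ∀ n, C n →ₗ[R] C n} (hGM : IsInvariant M σ) (hact : GChain.IsBasisAction Ω d σ A)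
    (g : G) (n : ℤ) :
    morseHomotopy Ω d hM n ∘ₗ A g n = A g (n + 1) ∘ₗ morseHomotopy Ω d hM n := by
  refine (morseBasis Ω d hM n).ext fun i => ?_
  rw [LinearMap.comp_apply, LinearMap.comp_apply, morseBasis_apply,
    map_morseVec Ω d hGM hact hM.isMatching]
  by_cases h : IsLower M n i
  · rw [morseVec_of_isLower Ω d h, morseVec_of_isLower Ω d (h.map hGM g),
      morseHomotopy_d_partner, morseHomotopy_d_partner, partner_map hGM hM.isMatching,
      hact.map_basis]
  · have h' := mt (isLower_map_iff hGM hact.σ_one hact.σ_mul g).mp h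
    rw [morseVec_of_not_isLower Ω d h, morseVec_of_not_isLower Ω d h',
      morseHomotopy_of_not_isLower hM h, morseHomotopy_of_not_isLower hM h', map_zero]

/-- `∂η + η∂` on `C (m + 1)`: in this indexing `d m` has source `C (m + 1)`, so no cast is
needed. -/
noncomputable def morseProjSucc (m : ℤ) : C (m + 1) →ₗ[R] C (m + 1) :=
  d (m + 1) ∘ₗ morseHomotopy Ω d hM (m + 1) + morseHomotopy Ω d hM m ∘ₗ d m

theorem morseProjSucc_d (hdd : ∀ n, d n ∘ₗ d (n + 1) = 0) (m : ℤ) (x : C (m + 1 + 1)) :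
    morseProjSucc hM m (d (m + 1) x) = d (m + 1) (morseProjSucc hM (m + 1) x) := by
  have h1 : d m (d (m + 1) x) = 0 := LinearMap.congr_fun (hdd m) x
  have h2 : d (m + 1) (d (m + 1 + 1) (morseHomotopy Ω d hM (m + 1 + 1) x)) = 0 :=
    LinearMap.congr_fun (hdd (m + 1)) _
  simp [morseProjSucc, h1, h2]

theorem isProj_morseProjSucc (hdeg : ∀ e ∈ M, e.2.1 = e.1.1 + 1)
    (hdd : ∀ n, d n ∘ₗ d (n + 1) = 0) (m : ℤ) :
    LinearMap.IsProj (TT Ω d M (m + 1)) (morseProjSucc hM m) where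
  map_mem x := add_mem
    (d_mem_TT Ω d hdd _ _ (span_upper_le_TT Ω d _ (morseHomotopy_mem_span_upper hM x)))
    (span_upper_le_TT Ω d _ (morseHomotopy_mem_span_upper hM (d m x)))
  map_id x hx := by
    refine LinearMap.eqOn_span (g := LinearMap.id) ?_ hx
    rintro _ (⟨j, hj, rfl⟩ | ⟨j, hj, rfl⟩) <;>
      obtain ⟨i, hi, rfl⟩ := IsUpper.exists_partner hM.isMatching hdeg hj
    · simp [morseProjSucc, morseHomotopy_of_not_isLower hM (IsUpper.not_isLower hM.isMatching hj),
        morseHomotopy_d_partner hM hi]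
    · have h0 : d m (d (m + 1) (Ω (m + 1 + 1) (partner hi))) = 0 :=
        LinearMap.congr_fun (hdd m) _
      simp [morseProjSucc, morseHomotopy_d_partner hM hi, h0]

noncomputable def morseProj (n : ℤ) : C n →ₗ[R] C n :=
  Int.ofAddOne (E := fun n => C n →ₗ[R] C n) (morseProjSucc hM) n

theorem morseProj_add_one (m : ℤ) : morseProj hM (m + 1) = morseProjSucc hM m :=
  Int.ofAddOne_add_one _ m

theorem isProj_morseProj (hdeg : ∀ e ∈ M, e.2.1 = e.1.1 + 1)
    (hdd : ∀ n, d n ∘ₗ d (n + 1) = 0) (n : ℤ) :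
    LinearMap.IsProj (TT Ω d M n) (morseProj hM n) := by
  obtain ⟨m, rfl⟩ : ∃ m, n = m + 1 := ⟨n - 1, by omega⟩
  rw [morseProj_add_one]
  exact isProj_morseProjSucc hM hdeg hdd m

theorem morseProj_d (hdd : ∀ n, d n ∘ₗ d (n + 1) = 0) (n : ℤ) (x : C (n + 1)) :
    morseProj hM n (d n x) = d n (morseProj hM (n + 1) x) := by
  obtain ⟨m, rfl⟩ : ∃ m, n = m + 1 := ⟨n - 1, by omega⟩
  rw [morseProj_add_one, morseProj_add_one]
  exact morseProjSucc_d hM hdd m x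

theorem morseProj_map {G : Type} [Group G] {σ : G → ∀ n, ι n → ι n}
    {A : G → ∀ n, C n →ₗ[R] C n} (hGM : IsInvariant M σ) (hact : GChain.IsBasisAction Ω d σ A)
    (g : G) (n : ℤ) (x : C n) :
    morseProj hM n (A g n x) = A g n (morseProj hM n x) := by
  obtain ⟨m, rfl⟩ : ∃ m, n = m + 1 := ⟨n - 1, by omega⟩
  have hη := morseHomotopy_comp_map hM hGM hact g
  simp only [morseProj_add_one, morseProjSucc, LinearMap.add_apply, LinearMap.comp_apply, map_add]
  rw [← LinearMap.comp_apply (morseHomotopy Ω d hM (m + 1)), hη, LinearMap.comp_apply,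
    ← LinearMap.comp_apply (d (m + 1)), hact.d_comp_map, LinearMap.comp_apply,
    ← LinearMap.comp_apply (d m), hact.d_comp_map, LinearMap.comp_apply,
    ← LinearMap.comp_apply (morseHomotopy Ω d hM m), hη, LinearMap.comp_apply]

end AlgebraicMorse

open AlgebraicMorse in
theorem stmt10_general {R G : Type} [CommRing R] [Group G]
    (ι : ℤ → Type) [∀ n, Fintype (ι n)]
    (C : ℤ → Type) [∀ n, AddCommGroup (C n)] [∀ n, Module R (C n)]
    (Ω : ∀ n, Module.Basis (ι n) R (C n))
    (d : ∀ n : ℤ, C (n + 1) →ₗ[R] C n)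
    (hdd : ∀ n, (d n) ∘ₗ (d (n + 1)) = 0)
    (σ : G → ∀ n, ι n → ι n)
    (hσone : ∀ n (i : ι n), σ 1 n i = i)
    (hσmul : ∀ g h n (i : ι n), σ (g * h) n i = σ g n (σ h n i))
    (A : G → ∀ n, C n →ₗ[R] C n)
    (hA : ∀ g n (i : ι n), A g n (Ω n i) = Ω n (σ g n i))
    (hchain : ∀ g n, (d n) ∘ₗ (A g (n + 1)) = (A g n) ∘ₗ (d n))
    (M : Set ((Σ n, ι n) × (Σ n, ι n)))
    (hstep : ∀ e ∈ M, ∃ h : e.2.1 = e.1.1 + 1,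
      (Ω e.1.1).repr (d e.1.1 (h ▸ (Ω e.2.1) e.2.2)) e.1.2 ≠ 0)
    (hdisj : ∀ e ∈ M, ∀ e' ∈ M, e ≠ e' →
      e.1 ≠ e'.1 ∧ e.1 ≠ e'.2 ∧ e.2 ≠ e'.1 ∧ e.2 ≠ e'.2)
    (hacyclic : ¬ ∃ (m : ℕ) (_ : 2 ≤ m) (p q : ZMod m → Σ n, ι n),
      (∀ i, (p i, q i) ∈ M) ∧ Function.Injective q ∧
      ∀ i, ∃ h : (q (i + 1)).1 = (p i).1 + 1,
        (Ω (p i).1).repr (d (p i).1 (h ▸ (Ω (q (i + 1)).1) (q (i + 1)).2))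
          (p i).2 ≠ 0)
    (hGM : ∀ e ∈ M, ∀ g : G,
      ((⟨e.1.1, σ g e.1.1 e.1.2⟩ : Σ n, ι n),
       (⟨e.2.1, σ g e.2.1 e.2.2⟩ : Σ n, ι n)) ∈ M)
    (hunit : ∀ e ∈ M, ∀ h : e.2.1 = e.1.1 + 1,
      IsUnit ((Ω e.1.1).repr (d e.1.1 (h ▸ (Ω e.2.1) e.2.2)) e.1.2)) :
    ∃ (D : GChain R G)
      (hT : ∀ n, ∀ x ∈ TT Ω d M (n + 1), d n x ∈ TT Ω d M n)
      (hGT : ∀ (g : G) (n : ℤ), ∀ x ∈ TT Ω d M n, A g n x ∈ TT Ω d M n)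
      (e : ∀ n : ℤ, C n ≃ₗ[R] D.X n × (TT Ω d M n)),
      -- the isomorphism is a chain map …
      (∀ n (x : C (n + 1)),
        e n (d n x) = (D.d n (e (n + 1) x).1,
          ((d n).restrict (hT n)) (e (n + 1) x).2)) ∧
      -- … and is G-equivariant
      (∀ (g : G) (n : ℤ) (x : C n),
        e n (A g n x) = (D.ρ g n (e n x).1,
          ((A g n).restrict (hGT g n)) (e n x).2)) := by
  have hM : IsMorseMatching M Ω d := ⟨hdisj, hacyclic, hunit⟩
  have hdeg : ∀ e ∈ M, e.2.1 = e.1.1 + 1 := fun e he => (hstep e he).1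
  have hact : GChain.IsBasisAction Ω d σ A := ⟨hσone, hσmul, hA, hchain⟩
  obtain ⟨E, e, he_d, he_A⟩ := (GChain.ofBasisAction hdd hact).exists_splitting_of_isProj
    (TT Ω d M) (d_mem_TT Ω d hdd) (map_mem_TT Ω d hGM hA hchain) (morseProj hM)
    (isProj_morseProj hM hdeg hdd) (morseProj_d hM hdd) (morseProj_map hM hGM hact)
  exact ⟨E, d_mem_TT Ω d hdd, map_mem_TT Ω d hGM hA hchain, e, he_d, he_A⟩

/-- Equivariant Algebraic Morse Theory: given a `G`-equivariant acyclic
matching `M` with invertible weights on `P(C_*,Ω)`, there is a `G`-chain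
complex `C_*^M` and a `G`-equivariant chain isomorphism
`C_* ≅_G C_*^M ⊕ T_*` where `T_* = ⊕_{G(a,b) ∈ M/G} 𝒜(Gb)`. -/
theorem stmt10 {R G : Type} [CommRing R] [Group G] [Finite G]
    (ι : ℤ → Type) [∀ n, Fintype (ι n)]
    (C : ℤ → Type) [∀ n, AddCommGroup (C n)] [∀ n, Module R (C n)]
    (Ω : ∀ n, Module.Basis (ι n) R (C n))
    (d : ∀ n : ℤ, C (n + 1) →ₗ[R] C n)
    (hdd : ∀ n, (d n) ∘ₗ (d (n + 1)) = 0)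
    (σ : G → ∀ n, ι n → ι n)
    (hσone : ∀ n (i : ι n), σ 1 n i = i)
    (hσmul : ∀ g h n (i : ι n), σ (g * h) n i = σ g n (σ h n i))
    (A : G → ∀ n, C n →ₗ[R] C n)
    (hA : ∀ g n (i : ι n), A g n (Ω n i) = Ω n (σ g n i))
    (hchain : ∀ g n, (d n) ∘ₗ (A g (n + 1)) = (A g n) ∘ₗ (d n))
    (M : Set ((Σ n, ι n) × (Σ n, ι n)))
    (hstep : ∀ e ∈ M, ∃ h : e.2.1 = e.1.1 + 1,
      (Ω e.1.1).repr (d e.1.1 (h ▸ (Ω e.2.1) e.2.2)) e.1.2 ≠ 0)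
    (hdisj : ∀ e ∈ M, ∀ e' ∈ M, e ≠ e' →
      e.1 ≠ e'.1 ∧ e.1 ≠ e'.2 ∧ e.2 ≠ e'.1 ∧ e.2 ≠ e'.2)
    (hacyclic : ¬ ∃ (m : ℕ) (_ : 2 ≤ m) (p q : ZMod m → Σ n, ι n),
      (∀ i, (p i, q i) ∈ M) ∧ Function.Injective q ∧
      ∀ i, ∃ h : (q (i + 1)).1 = (p i).1 + 1,
        (Ω (p i).1).repr (d (p i).1 (h ▸ (Ω (q (i + 1)).1) (q (i + 1)).2))
          (p i).2 ≠ 0)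
    (hGM : ∀ e ∈ M, ∀ g : G,
      ((⟨e.1.1, σ g e.1.1 e.1.2⟩ : Σ n, ι n),
       (⟨e.2.1, σ g e.2.1 e.2.2⟩ : Σ n, ι n)) ∈ M)
    (hunit : ∀ e ∈ M, ∀ h : e.2.1 = e.1.1 + 1,
      IsUnit ((Ω e.1.1).repr (d e.1.1 (h ▸ (Ω e.2.1) e.2.2)) e.1.2)) :
    ∃ (D : GChain R G)
      (hT : ∀ n, ∀ x ∈ TT Ω d M (n + 1), d n x ∈ TT Ω d M n)
      (hGT : ∀ (g : G) (n : ℤ), ∀ x ∈ TT Ω d M n, A g n x ∈ TT Ω d M n)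
      (e : ∀ n : ℤ, C n ≃ₗ[R] D.X n × (TT Ω d M n)),
      -- the isomorphism is a chain map …
      (∀ n (x : C (n + 1)),
        e n (d n x) = (D.d n (e (n + 1) x).1,
          ((d n).restrict (hT n)) (e (n + 1) x).2)) ∧
      -- … and is G-equivariant
      (∀ (g : G) (n : ℤ) (x : C n),
        e n (A g n x) = (D.ρ g n (e n x).1,
          ((A g n).restrict (hGT g n)) (e n x).2)) :=
  stmt10_general ι C Ω d hdd σ hσone hσmul A hA hchain M hstep hdisj hacyclic hGM hunit
end
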